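/- arXiv:2204.06062 — 2 statements merged into one kernel-verified Lean document; each statement's English description precedes it below -/
import Mathlib

section
/- Let P ⊆ ℝ^n be a pointed polyhedral set of dimension n. Then the map base_P : P → K_P sending p to the unique point x ∈ K_P with p = x + δ_P(p)·y for a unit vector y ∈ char.cone(P) is continuous. -/
open scoped RealInnerProductSpace
open Set

noncomputable section

abbrev E (n : ℕ) := EuclideanSpace ℝ (Fin n)

/-- A polyhedral set: an intersection of finitely many closed half-spaces. -/
def IsPolyhedral {n : ℕ} (P : Set (E n)) : Prop :=
  ∃ (m : ℕ) (w : Fin m → E n) (b : Fin m → ℝ),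
    P = {x | ∀ i, ⟪w i, x⟫ + b i ≤ 0}

/-- The characteristic (recession) cone of `P`. -/
def charCone {n : ℕ} (P : Set (E n)) : Set (E n) := {y | ∀ x ∈ P, x + y ∈ P}

/-- The lineality space of `P`: `charCone P ∩ (−charCone P)`. -/
def linealitySpace {n : ℕ} (P : Set (E n)) : Set (E n) :=
  charCone P ∩ {y | -y ∈ charCone P}

/-- `P` is pointed if its lineality space is trivial. -/
def IsPointed {n : ℕ} (P : Set (E n)) : Prop := linealitySpace P = {0}

/-- `(w, b)` determines a supporting hyperplane of `P`. -/
def IsSupporting {n : ℕ} (w : E n) (b : ℝ) (P : Set (E n)) : Prop :=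
  w ≠ 0 ∧ (∀ x ∈ P, ⟪w, x⟫ + b ≤ 0) ∧ ∃ x ∈ P, ⟪w, x⟫ + b = 0

/-- A face of a polyhedral set: `∅`, `P` itself, or the intersection of `P` with a
supporting hyperplane. -/
def IsFace {n : ℕ} (P F : Set (E n)) : Prop :=
  F = ∅ ∨ F = P ∨ ∃ w b, IsSupporting w b P ∧ F = {x ∈ P | ⟪w, x⟫ + b = 0}

/-- A vertex (0-dimensional face) of `P`. -/
def IsVertex {n : ℕ} (P : Set (E n)) (v : E n) : Prop := IsFace P {v}

/-- `K_P`: the convex hull of the vertices of `P`. -/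
def Kpart {n : ℕ} (P : Set (E n)) : Set (E n) := convexHull ℝ {v | IsVertex P v}

/-- The set of admissible distances from `K_P` to `p` along unit directions of the
characteristic cone. -/
def deltaSet {n : ℕ} (P : Set (E n)) (p : E n) : Set ℝ :=
  {t : ℝ | 0 ≤ t ∧ ∃ x ∈ Kpart P, ∃ y ∈ charCone P, ‖y‖ = 1 ∧ p = x + t • y}

/-- `δ_P(p)`: the minimal distance from `K_P` to `p` along directions in the
characteristic cone. -/
def delta {n : ℕ} (P : Set (E n)) (p : E n) : ℝ := sInf (deltaSet P p)

/-!
Averaging two decompositions `p = x + c`, `z = x' + c'` (with `x, x' ∈ K_P` and `c, c'` in the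
characteristic cone) decomposes the average, so `δ_P` is convex on `P`. A polyhedron looks like a
cone near each of its points, which makes such a convex function upper semicontinuous on `P`.
If `q → p` in `P` and `x` is a cluster point of `base_P(q)` in the compact set `K_P` (the hull of
finitely many vertices), then `p - x` lies in the closed characteristic cone and
`‖p - x‖ = lim δ_P(q) ≤ δ_P(p)`, so `x` is a base of `p`. Finally the base is unique: averaging two
bases gives a direction that is strictly shorter, by strict convexity of the Euclidean norm, unless
they agree. Hence `x = base_P(p)`.
-/

open Filter Topology

def polyhedron {n m : ℕ} (w : Fin m → E n) (b : Fin m → ℝ) : Set (E n) :=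
  {x | ∀ i, ⟪w i, x⟫ + b i ≤ 0}

section Polyhedron

variable {n m : ℕ}

theorem isClosed_polyhedron (w : Fin m → E n) (b : Fin m → ℝ) : IsClosed (polyhedron w b) := by
  simp only [polyhedron, ofPred_forall]
  exact isClosed_iInter fun _ => isClosed_le (by fun_prop) continuous_const

theorem convex_polyhedron (w : Fin m → E n) (b : Fin m → ℝ) : Convex ℝ (polyhedron w b) := by
  simp only [polyhedron, ofPred_forall]
  refine convex_iInter fun i => ?_
  simpa only [← le_neg_iff_add_nonpos_right] using
    convex_halfSpace_le ⟨inner_add_right (w i), fun c x => real_inner_smul_right (w i) x c⟩ (-b i)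

theorem exists_pos_add_smul_mem_polyhedron {w : Fin m → E n} {b : Fin m → ℝ} {p : E n}
    (hp : p ∈ polyhedron w b) :
    ∃ ρ > 0, ∀ d : E n, (∀ i, ⟪w i, p⟫ + b i = 0 → ⟪w i, d⟫ ≤ 0) →
      ∀ t : ℝ, 0 ≤ t → t * ‖d‖ ≤ ρ → p + t • d ∈ polyhedron w b := by
  set A : Fin m → ℝ := fun i => ⟪w i, p⟫ + b i
  have hρ : ∀ᶠ ρ in 𝓝[>] (0 : ℝ), ∀ i, A i < 0 → A i + ‖w i‖ * ρ ≤ 0 := by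
    refine nhdsWithin_le_nhds (eventually_all.2 fun i => ?_)
    by_cases hi : A i < 0
    · have hlim : Tendsto (fun ρ : ℝ => A i + ‖w i‖ * ρ) (𝓝 0) (𝓝 (A i)) :=
        (by fun_prop : Continuous fun ρ : ℝ => A i + ‖w i‖ * ρ).tendsto' 0 _ (by simp)
      exact (hlim.eventually (gt_mem_nhds hi)).mono fun _ h _ => h.le
    · exact .of_forall fun _ h => absurd h hi
  obtain ⟨ρ, hρA, hρpos⟩ := (hρ.and self_mem_nhdsWithin).exists
  refine ⟨ρ, hρpos, fun d hd t ht htd i => ?_⟩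
  have hval : ⟪w i, p + t • d⟫ + b i = A i + t * ⟪w i, d⟫ := by
    simp only [A, inner_add_right, real_inner_smul_right]; ring
  rw [hval]
  rcases (hp i).lt_or_eq with hi | hi
  · have : t * ⟪w i, d⟫ ≤ ‖w i‖ * ρ :=
      calc t * ⟪w i, d⟫ ≤ t * (‖w i‖ * ‖d‖) := by gcongr; exact real_inner_le_norm _ _
        _ = ‖w i‖ * (t * ‖d‖) := by ring
        _ ≤ ‖w i‖ * ρ := by gcongr
    linarith [hρA i hi]
  · linarith [mul_nonpos_of_nonneg_of_nonpos ht (hd i hi)]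

end Polyhedron

section Vertex

variable {n : ℕ} {P : Set (E n)} {v : E n}

theorem IsVertex.mem (hv : IsVertex P v) : v ∈ P := by
  rcases hv with h | h | ⟨u, c, -, h⟩
  · exact absurd h (singleton_ne_empty v)
  · exact h ▸ mem_singleton v
  · exact (h.subset (mem_singleton v)).1

theorem IsVertex.eq_zero_of_add_mem_of_sub_mem {d : E n} (hv : IsVertex P v) (h₁ : v + d ∈ P)
    (h₂ : v - d ∈ P) : d = 0 := by
  rcases hv with h | h | ⟨u, c, ⟨-, hle, -⟩, h⟩
  · exact absurd h (singleton_ne_empty v)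
  · simpa using h.symm.subset h₁
  · have hv : ⟪u, v⟫ + c = 0 := (h.subset (mem_singleton v)).2
    have hd : ⟪u, d⟫ = 0 := by
      have := hle _ h₁
      have := hle _ h₂
      simp only [inner_add_right, inner_sub_right] at *
      linarith
    have : v + d ∈ ({v} : Set (E n)) := h.symm.subset ⟨h₁, by rw [inner_add_right]; linarith⟩
    simpa using this

end Vertex

/-- A vertex is determined by its set of active constraints. -/
theorem finite_setOf_isVertex_polyhedron {n m : ℕ} (w : Fin m → E n) (b : Fin m → ℝ) :
    {v | IsVertex (polyhedron w b) v}.Finite := by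
  refine Finite.of_finite_image (f := fun v => {i | ⟪w i, v⟫ + b i = 0}) (toFinite _) ?_
  intro v hv v' _ hact
  by_contra hne
  have hflat : ∀ i, ⟪w i, v⟫ + b i = 0 → ⟪w i, v - v'⟫ = 0 := fun i hi => by
    have hi' : ⟪w i, v'⟫ + b i = 0 := (congrArg (i ∈ ·) hact).mp hi
    rw [inner_sub_right]
    linarith
  obtain ⟨ρ, hρ, hseg⟩ := exists_pos_add_smul_mem_polyhedron hv.mem
  have hdist : 0 < ‖v - v'‖ := norm_pos_iff.2 (sub_ne_zero.2 hne)
  set t := ρ / ‖v - v'‖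
  have ht : 0 < t := div_pos hρ hdist
  have h₁ : v + t • (v - v') ∈ polyhedron w b :=
    hseg _ (fun i hi => (hflat i hi).le) t ht.le (div_mul_cancel₀ ρ hdist.ne').le
  have h₂ : v + t • (v' - v) ∈ polyhedron w b :=
    hseg _ (fun i hi => by rw [← neg_sub, inner_neg_right, hflat i hi, neg_zero]) t ht.le
      (by rw [norm_sub_rev, div_mul_cancel₀ ρ hdist.ne'])
  have := hv.eq_zero_of_add_mem_of_sub_mem h₁ (by convert h₂ using 1; module)
  exact hne (sub_eq_zero.1 ((smul_eq_zero.1 this).resolve_left ht.ne'))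

section CharCone

variable {n : ℕ} {P : Set (E n)}

theorem add_mem_charCone {y z : E n} (hy : y ∈ charCone P) (hz : z ∈ charCone P) :
    y + z ∈ charCone P :=
  fun x hx => add_assoc x y z ▸ hz _ (hy x hx)

theorem nsmul_mem_charCone {y : E n} (hy : y ∈ charCone P) : ∀ k : ℕ, k • y ∈ charCone P
  | 0 => fun x hx => by simpa using hx
  | k + 1 => succ_nsmul y k ▸ add_mem_charCone (nsmul_mem_charCone hy k) hy

theorem Convex.smul_mem_charCone (hP : Convex ℝ P) {y : E n} (hy : y ∈ charCone P) {c : ℝ}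
    (hc : 0 ≤ c) : c • y ∈ charCone P := by
  intro x hx
  set k : ℕ := ⌈c⌉₊ + 1
  have hk : (0 : ℝ) < k := by positivity
  have hck : c ≤ k := by simp only [k, Nat.cast_add, Nat.cast_one]; linarith [Nat.le_ceil c]
  have := hP.add_smul_mem hx (nsmul_mem_charCone hy k x hx)
    ⟨div_nonneg hc hk.le, (div_le_one hk).2 hck⟩
  rwa [← Nat.cast_smul_eq_nsmul ℝ, smul_smul, div_mul_cancel₀ c hk.ne'] at this

theorem isClosed_charCone (hP : IsClosed P) : IsClosed (charCone P) := by
  have : charCone P = ⋂ x ∈ P, (x + ·) ⁻¹' P := by ext; simp [charCone]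
  rw [this]
  exact isClosed_biInter fun x _ => hP.preimage (continuous_const_add x)

end CharCone

section Delta

variable {n : ℕ} {P : Set (E n)}

theorem delta_nonneg (P : Set (E n)) (p : E n) : 0 ≤ delta P p :=
  Real.sInf_nonneg fun _ ht => ht.1

theorem delta_le_norm_sub (hP : Convex ℝ P) (hunit : ∃ y ∈ charCone P, ‖y‖ = 1) {p x : E n}
    (hx : x ∈ Kpart P) (hpx : p - x ∈ charCone P) : delta P p ≤ ‖p - x‖ := by
  refine csInf_le ⟨0, fun _ ht => ht.1⟩ ?_
  rcases eq_or_ne (p - x) 0 with h | h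
  · obtain ⟨y, hy, hy1⟩ := hunit
    refine ⟨norm_nonneg _, x, hx, y, hy, hy1, ?_⟩
    rw [h, norm_zero, zero_smul, add_zero, ← sub_eq_zero, h]
  · have hn : ‖p - x‖ ≠ 0 := norm_ne_zero_iff.2 h
    refine ⟨norm_nonneg _, x, hx, ‖p - x‖⁻¹ • (p - x),
      hP.smul_mem_charCone hpx (by positivity), ?_, ?_⟩
    · rw [norm_smul, norm_inv, norm_norm, inv_mul_cancel₀ hn]
    · rw [smul_smul, mul_inv_cancel₀ hn, one_smul, add_sub_cancel]

/-- `IsBase P p x` says `x = base_P(p)`; the unit direction of the paper is `(p - x) / δ_P(p)`. -/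
def IsBase (P : Set (E n)) (p x : E n) : Prop :=
  x ∈ Kpart P ∧ p - x ∈ charCone P ∧ ‖p - x‖ = delta P p

theorem isBase_of_eq_add_smul (hP : Convex ℝ P) {p x y : E n} (hx : x ∈ Kpart P)
    (hy : y ∈ charCone P) (hy1 : ‖y‖ = 1) (hp : p = x + delta P p • y) : IsBase P p x := by
  have hpx : p - x = delta P p • y := sub_eq_of_eq_add' hp
  refine ⟨hx, hpx ▸ hP.smul_mem_charCone hy (delta_nonneg P p), ?_⟩
  rw [hpx, norm_smul, hy1, mul_one, Real.norm_of_nonneg (delta_nonneg P p)]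

theorem IsBase.unique (hP : Convex ℝ P) (hunit : ∃ y ∈ charCone P, ‖y‖ = 1) {p x₁ x₂ : E n}
    (h₁ : IsBase P p x₁) (h₂ : IsBase P p x₂) : x₁ = x₂ := by
  obtain ⟨hx₁, hc₁, hn₁⟩ := h₁
  obtain ⟨hx₂, hc₂, hn₂⟩ := h₂
  have hmK : (2 : ℝ)⁻¹ • x₁ + (2 : ℝ)⁻¹ • x₂ ∈ Kpart P :=
    convex_convexHull ℝ _ hx₁ hx₂ (by norm_num) (by norm_num) (by norm_num)
  have hpm : p - ((2 : ℝ)⁻¹ • x₁ + (2 : ℝ)⁻¹ • x₂) = (2 : ℝ)⁻¹ • ((p - x₁) + (p - x₂)) := by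
    module
  have hle := delta_le_norm_sub hP hunit hmK
    (hpm ▸ hP.smul_mem_charCone (add_mem_charCone hc₁ hc₂) (by norm_num))
  have hray : SameRay ℝ (p - x₁) (p - x₂) := by
    rw [sameRay_iff_norm_add]
    refine le_antisymm (norm_add_le _ _) ?_
    rw [hpm, norm_smul, norm_inv, Real.norm_ofNat] at hle
    linarith
  exact sub_right_injective (hray.eq_of_norm_eq (hn₁.trans hn₂.symm))

theorem convexOn_delta (hP : Convex ℝ P) (hunit : ∃ y ∈ charCone P, ‖y‖ = 1)
    (hbase : ∀ p ∈ P, ∃ x, IsBase P p x) : ConvexOn ℝ P (delta P) := by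
  refine ⟨hP, fun p hp q hq a b ha hb hab => ?_⟩
  obtain ⟨x, hxK, hxC, hxn⟩ := hbase p hp
  obtain ⟨y, hyK, hyC, hyn⟩ := hbase q hq
  have hsub : a • p + b • q - (a • x + b • y) = a • (p - x) + b • (q - y) := by module
  have hC : a • p + b • q - (a • x + b • y) ∈ charCone P :=
    hsub ▸ add_mem_charCone (hP.smul_mem_charCone hxC ha) (hP.smul_mem_charCone hyC hb)
  calc delta P (a • p + b • q)
      ≤ ‖a • (p - x) + b • (q - y)‖ :=
        hsub ▸ delta_le_norm_sub hP hunit (convex_convexHull ℝ _ hxK hyK ha hb hab) hC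
    _ ≤ a * ‖p - x‖ + b * ‖q - y‖ := by
        grw [norm_add_le, norm_smul, norm_smul, Real.norm_of_nonneg ha, Real.norm_of_nonneg hb]
    _ = a • delta P p + b • delta P q := by rw [hxn, hyn, smul_eq_mul, smul_eq_mul]

end Delta

/-- A point `q ∈ P` close to `p` lies on the segment from `p` to the point of `P` at distance `ρ`
beyond `q`, at parameter `‖q - p‖ / ρ`; convexity turns this into a linear bound above. -/
theorem ConvexOn.upperSemicontinuousWithinAt_polyhedron {n m : ℕ} {w : Fin m → E n}
    {b : Fin m → ℝ} {g : E n → ℝ} (hg : ConvexOn ℝ (polyhedron w b) g)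
    (hbdd : ∀ s ⊆ polyhedron w b, Bornology.IsBounded s → BddAbove (g '' s))
    {p : E n} (hp : p ∈ polyhedron w b) :
    UpperSemicontinuousWithinAt g (polyhedron w b) p := by
  obtain ⟨ρ, hρ, hseg⟩ := exists_pos_add_smul_mem_polyhedron hp
  obtain ⟨M, hM⟩ := hbdd (polyhedron w b ∩ Metric.closedBall p ρ) inter_subset_left
    (Metric.isBounded_closedBall.subset inter_subset_right)
  have hbound : ∀ q ∈ polyhedron w b, ‖q - p‖ ≤ ρ →
      g q ≤ g p + (M - g p) / ρ * ‖q - p‖ := by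
    intro q hq hqp
    rcases eq_or_ne q p with rfl | hne
    · simp
    have hd : 0 < ‖q - p‖ := norm_pos_iff.2 (sub_ne_zero.2 hne)
    set z := p + (ρ / ‖q - p‖) • (q - p)
    have hz : z ∈ polyhedron w b :=
      hseg _ (fun i hi => by rw [inner_sub_right]; linarith [hq i]) _ (by positivity)
        (div_mul_cancel₀ ρ hd.ne').le
    have hzp : dist z p = ρ := by
      rw [dist_eq_norm, add_sub_cancel_left, norm_smul, Real.norm_of_nonneg (by positivity),
        div_mul_cancel₀ ρ hd.ne']
    have hzM : g z ≤ M := hM ⟨z, ⟨hz, hzp.le⟩, rfl⟩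
    set lam := ‖q - p‖ / ρ
    have hlam : 0 ≤ lam := by positivity
    have hq_eq : (1 - lam) • p + lam • z = q := by
      have : lam * (ρ / ‖q - p‖) = 1 := by simp only [lam]; field_simp
      simp only [z, smul_add, smul_smul, this, one_smul]
      module
    have hconv := hg.2 hp hz (sub_nonneg.2 ((div_le_one hρ).2 hqp)) hlam (by ring)
    rw [hq_eq, smul_eq_mul, smul_eq_mul] at hconv
    have : (M - g p) / ρ * ‖q - p‖ = lam * (M - g p) := by ring
    nlinarith
  intro y hy
  have hlim : Tendsto (fun q => g p + (M - g p) / ρ * ‖q - p‖) (𝓝[polyhedron w b] p)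
      (𝓝 (g p)) := by
    have := ((by fun_prop : Continuous fun q : E n => g p + (M - g p) / ρ * ‖q - p‖).tendsto p)
    simpa using this.mono_left nhdsWithin_le_nhds
  filter_upwards [hlim.eventually (gt_mem_nhds hy), self_mem_nhdsWithin,
    nhdsWithin_le_nhds (Metric.closedBall_mem_nhds p hρ)] with q hqy hq hqρ
  exact (hbound q hq (by rwa [Metric.mem_closedBall, dist_eq_norm] at hqρ)).trans_lt hqy

theorem bddAbove_delta_image {n : ℕ} {P s : Set (E n)} (hK : Bornology.IsBounded (Kpart P))
    (hs : Bornology.IsBounded s) (hbase : ∀ q ∈ s, ∃ x, IsBase P q x) :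
    BddAbove (delta P '' s) := by
  obtain ⟨R, hR⟩ := hK.exists_norm_le
  obtain ⟨B, hB⟩ := hs.exists_norm_le
  refine ⟨B + R, forall_mem_image.2 fun q hq => ?_⟩
  obtain ⟨x, hx, -, hxn⟩ := hbase q hq
  rw [← hxn]
  exact (norm_sub_le q x).trans (add_le_add (hB q hq) (hR x hx))

theorem isBase_of_mapClusterPt {n : ℕ} {P : Set (E n)} (hP : IsClosed P) (hconv : Convex ℝ P)
    (hunit : ∃ y ∈ charCone P, ‖y‖ = 1) {f : E n → E n} (hf : ∀ q ∈ P, IsBase P q (f q))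
    {p x : E n} (husc : UpperSemicontinuousWithinAt (delta P) P p) (hx : x ∈ Kpart P)
    (hclust : MapClusterPt x (𝓝[P] p) f) : IsBase P p x := by
  obtain ⟨U, hUP, hUx⟩ := mapClusterPt_iff_ultrafilter.1 hclust
  have hmem : ∀ᶠ q in (U : Filter (E n)), q ∈ P := hUP self_mem_nhdsWithin
  have hdir : Tendsto (fun q => q - f q) U (𝓝 (p - x)) :=
    (tendsto_id.mono_left (hUP.trans nhdsWithin_le_nhds)).sub hUx
  have hC : p - x ∈ charCone P :=
    (isClosed_charCone hP).mem_of_tendsto hdir (hmem.mono fun q hq => (hf q hq).2.1)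
  refine ⟨hx, hC, le_antisymm (le_of_forall_pos_le_add fun ε hε => ?_)
    (delta_le_norm_sub hconv hunit hx hC)⟩
  refine le_of_tendsto hdir.norm ?_
  filter_upwards [hUP (husc _ (lt_add_of_pos_right _ hε)), hmem] with q hq hqP
  exact (hf q hqP).2.2 ▸ hq.le

theorem base_continuousOn_general {n : ℕ} (Pset : Set (E n))
    (hP : IsPolyhedral Pset)
    (f : E n → E n)
    (hf : ∀ p ∈ Pset, f p ∈ Kpart Pset ∧
      ∃ y ∈ charCone Pset, ‖y‖ = 1 ∧ p = f p + delta Pset p • y) :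
    ContinuousOn f Pset := by
  obtain ⟨m, w, b, rfl⟩ := hP
  have hconv := convex_polyhedron w b
  have hbase : ∀ q ∈ polyhedron w b, IsBase (polyhedron w b) q (f q) := fun q hq =>
    let ⟨hK, _, hy, hy1, hq⟩ := hf q hq
    isBase_of_eq_add_smul hconv hK hy hy1 hq
  have hK : IsCompact (Kpart (polyhedron w b)) :=
    (finite_setOf_isVertex_polyhedron w b).isCompact_convexHull ℝ
  intro p hp
  obtain ⟨-, y, hy, hy1, -⟩ := hf p hp
  have hunit : ∃ y ∈ charCone (polyhedron w b), ‖y‖ = 1 := ⟨y, hy, hy1⟩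
  have husc : UpperSemicontinuousWithinAt (delta (polyhedron w b)) (polyhedron w b) p :=
    ConvexOn.upperSemicontinuousWithinAt_polyhedron
      (convexOn_delta hconv hunit fun q hq => ⟨f q, hbase q hq⟩)
      (fun s hs hsb => bddAbove_delta_image hK.isBounded hsb fun q hq => ⟨f q, hbase q (hs hq)⟩)
      hp
  refine hK.tendsto_nhds_of_unique_mapClusterPt
    (eventually_mem_nhdsWithin.mono fun q hq => (hbase q hq).1) fun x hx hclust => ?_
  exact (isBase_of_mapClusterPt (isClosed_polyhedron w b) hconv hunit hbase husc hx hclust).unique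
    hconv hunit (hbase p hp)

/-- The base map of a full-dimensional pointed polyhedral set is continuous:
any function realizing the unique minimizing point is continuous on P. -/
theorem base_continuousOn {n : ℕ} (Pset : Set (E n))
    (hP : IsPolyhedral Pset) (hptd : IsPointed Pset)
    (hfull : (interior Pset).Nonempty)
    (f : E n → E n)
    (hf : ∀ p ∈ Pset, f p ∈ Kpart Pset ∧
      ∃ y ∈ charCone Pset, ‖y‖ = 1 ∧ p = f p + delta Pset p • y) :
    ContinuousOn f Pset :=
  base_continuousOn_general Pset hP f hf
end
end

section
/- Let 𝒞 be a polyhedral complex in ℝ^n with all cells pointed. If C₁, C₂ ∈ 𝒞 have nonempty intersection, then K_{C₁ ∩ C₂} = K_{C₁} ∩ K_{C₂}, and K_{C₁ ∩ C₂} is a face of both K_{C₁} and K_{C₂}, where K_C denotes the convex hull of the vertices of C. -/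
open scoped RealInnerProductSpace
open Set

noncomputable section

/-- A polyhedral complex in ℝⁿ: a finite family of nonempty polyhedral sets, closed
under taking (nonempty) faces, in which any two cells intersect in a common face. -/
def IsPolyComplex {n : ℕ} (cells : Set (Set (E n))) : Prop :=
  cells.Finite ∧
  (∀ C ∈ cells, IsPolyhedral C ∧ C.Nonempty) ∧
  (∀ C ∈ cells, ∀ F, IsFace C F → F.Nonempty → F ∈ cells) ∧
  (∀ C ∈ cells, ∀ D ∈ cells, IsFace C (C ∩ D) ∧ IsFace D (C ∩ D))

/-!
A face `F = P ∩ {f = 0}` (with `f ≤ 0` on `P`) is an extreme subset of `P`, and for a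
polyhedron the vertices are exactly the extreme points. Hence the vertices of `F` are the
vertices of `P` lying in `F`, and since `K_P ∩ F` is extreme in `K_P = conv (vert P)`, it is
the hull of the vertices it contains: `K_F = K_P ∩ F`, which is cut out of `K_P` by the same
functional. Applying this to `F = C₁ ∩ C₂`, a face of both cells, gives
`K_{C₁ ∩ C₂} = K_{C₁} ∩ (C₁ ∩ C₂) = K_{C₁} ∩ K_{C₂}`.
-/

open Filter Topology

section ExtremeHull

variable {𝕜 V : Type*} [Semiring 𝕜] [PartialOrder 𝕜] [AddCommMonoid V] [Module 𝕜 V]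
  {A B C S : Set V}

theorem IsExtreme.inter_of_subset (hAB : IsExtreme 𝕜 A B) (hCA : C ⊆ A) :
    IsExtreme 𝕜 C (C ∩ B) :=
  ⟨inter_subset_left, fun _ hx _ hy _ hz hseg =>
    ⟨hx, hAB.left_mem_of_mem_openSegment (hCA hx) (hCA hy) hz.2 hseg⟩⟩

theorem IsExtreme.subset_convexHull_inter (hB : IsExtreme 𝕜 (convexHull 𝕜 S) B) :
    B ⊆ convexHull 𝕜 (S ∩ B) := by
  suffices hull : convexHull 𝕜 S ⊆ {p ∈ convexHull 𝕜 S | p ∈ B → p ∈ convexHull 𝕜 (S ∩ B)} from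
    fun p hp => (hull (hB.subset hp)).2 hp
  refine convexHull_min (fun v hv => ⟨subset_convexHull 𝕜 _ hv,
    fun hvB => subset_convexHull 𝕜 _ ⟨hv, hvB⟩⟩) ?_
  rintro x ⟨hxS, hxB⟩ y ⟨hyS, hyB⟩ a c ha hc hac
  refine ⟨convex_convexHull 𝕜 S hxS hyS ha hc hac, fun hzB => ?_⟩
  rcases ha.eq_or_lt with rfl | ha
  · obtain rfl : c = 1 := by rwa [zero_add] at hac
    simp only [zero_smul, one_smul, zero_add] at hzB ⊢
    exact hyB hzB
  rcases hc.eq_or_lt with rfl | hc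
  · obtain rfl : a = 1 := by rwa [add_zero] at hac
    simp only [zero_smul, one_smul, add_zero] at hzB ⊢
    exact hxB hzB
  have hseg : a • x + c • y ∈ openSegment 𝕜 x y := ⟨a, c, ha, hc, hac, rfl⟩
  exact convex_convexHull 𝕜 _ (hxB (hB.left_mem_of_mem_openSegment hxS hyS hzB hseg))
    (hyB (hB.right_mem_of_mem_openSegment hxS hyS hzB hseg)) ha.le hc.le hac

end ExtremeHull

section Polyhedral

variable {n : ℕ} {P F : Set (E n)} {v : E n}

theorem isFace_iff_exists_sep :
    IsFace P F ↔ ∃ (w : E n) (b : ℝ), (∀ x ∈ P, ⟪w, x⟫ + b ≤ 0) ∧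
      F = {x ∈ P | ⟪w, x⟫ + b = 0} := by
  constructor
  · rintro (rfl | rfl | ⟨w, b, ⟨-, hle, -⟩, rfl⟩)
    · exact ⟨0, -1, by simp, by simp⟩
    · exact ⟨0, 0, by simp, by simp⟩
    · exact ⟨w, b, hle, rfl⟩
  · rintro ⟨w, b, hle, rfl⟩
    rcases eq_empty_or_nonempty {x ∈ P | ⟪w, x⟫ + b = 0} with hF | ⟨x₀, hx₀P, hx₀⟩
    · exact Or.inl hF
    by_cases hw : w = 0
    · subst hw
      have hb : b = 0 := by simpa using hx₀
      exact Or.inr (Or.inl (by simp [hb]))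
    · exact Or.inr (Or.inr ⟨w, b, ⟨hw, hle, x₀, hx₀P, hx₀⟩, rfl⟩)

theorem isExposed_sep {w : E n} {b : ℝ} (hle : ∀ x ∈ P, ⟪w, x⟫ + b ≤ 0) :
    IsExposed ℝ P {x ∈ P | ⟪w, x⟫ + b = 0} := by
  rintro ⟨x₀, hx₀P, hx₀⟩
  refine ⟨innerSL ℝ w, ?_⟩
  ext x
  simp only [mem_sep_iff, innerSL_apply_apply]
  constructor
  · rintro ⟨hx, hx0⟩
    exact ⟨hx, fun y hy => by linarith [hle y hy]⟩
  · rintro ⟨hx, hmax⟩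
    exact ⟨hx, le_antisymm (hle x hx) (by linarith [hmax x₀ hx₀P])⟩

theorem IsFace.isExtreme (hF : IsFace P F) : IsExtreme ℝ P F := by
  obtain ⟨w, b, hle, rfl⟩ := isFace_iff_exists_sep.1 hF
  exact (isExposed_sep hle).isExtreme

theorem IsVertex.mem_extremePoints (hv : IsVertex P v) : v ∈ P.extremePoints ℝ :=
  IsFace.isExtreme hv |>.mem_extremePoints

theorem IsPolyhedral.convex (hP : IsPolyhedral P) : Convex ℝ P := by
  obtain ⟨m, w, b, rfl⟩ := hP
  have halfSpace (i : Fin m) : {x : E n | ⟪w i, x⟫ + b i ≤ 0} = {x | ⟪w i, x⟫ ≤ -b i} := by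
    ext x
    simp only [mem_ofPred_eq]
    constructor <;> intro h <;> linarith
  simp only [ofPred_forall, halfSpace]
  exact convex_iInter fun i => convex_halfSpace_le (innerₛₗ ℝ (w i)).isLinear (-b i)

theorem IsPolyhedral.inter {Q : Set (E n)} (hP : IsPolyhedral P) (hQ : IsPolyhedral Q) :
    IsPolyhedral (P ∩ Q) := by
  obtain ⟨m, w, b, rfl⟩ := hP
  obtain ⟨k, w', b', rfl⟩ := hQ
  refine ⟨m + k, Fin.append w w', Fin.append b b', ?_⟩
  ext x
  simp [Fin.forall_fin_add]

section Vertices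

variable {m : ℕ} {w : Fin m → E n} {b : Fin m → ℝ} {x : E n}

theorem exists_pos_add_smul_sub_mem (hv : ∀ i, ⟪w i, v⟫ + b i ≤ 0)
    (htight : ∀ i, ⟪w i, v⟫ + b i = 0 → ⟪w i, x⟫ + b i = 0) :
    ∃ ε : ℝ, 0 < ε ∧ ∀ i, ⟪w i, v + ε • (v - x)⟫ + b i ≤ 0 := by
  have hline (i : Fin m) (ε : ℝ) : ⟪w i, v + ε • (v - x)⟫ + b i =
      (⟪w i, v⟫ + b i) + ε * ((⟪w i, v⟫ + b i) - (⟪w i, x⟫ + b i)) := by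
    rw [inner_add_right, real_inner_smul_right, inner_sub_right]
    ring
  have hnear : ∀ᶠ ε in 𝓝 (0 : ℝ), ∀ i, ⟪w i, v + ε • (v - x)⟫ + b i ≤ 0 := by
    refine eventually_all.2 fun i => ?_
    simp only [hline]
    rcases (hv i).eq_or_lt with hact | hslack
    · exact Eventually.of_forall fun ε => by simp [hact, htight i hact]
    · have hlim : Tendsto (fun ε : ℝ => (⟪w i, v⟫ + b i) +
          ε * ((⟪w i, v⟫ + b i) - (⟪w i, x⟫ + b i))) (𝓝 0) (𝓝 (⟪w i, v⟫ + b i)) :=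
        (by fun_prop : Continuous fun ε : ℝ => (⟪w i, v⟫ + b i) +
          ε * ((⟪w i, v⟫ + b i) - (⟪w i, x⟫ + b i))).tendsto' 0 _ (by simp)
      exact hlim.eventually (ge_mem_nhds hslack)
  obtain ⟨ε, hε, hpos⟩ :=
    ((hnear.filter_mono nhdsWithin_le_nhds).and self_mem_nhdsWithin).exists (f := 𝓝[>] (0 : ℝ))
  exact ⟨ε, hpos, hε⟩

theorem eq_of_mem_extremePoints_of_tight
    (hv : v ∈ {y : E n | ∀ i, ⟪w i, y⟫ + b i ≤ 0}.extremePoints ℝ)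
    (hx : ∀ i, ⟪w i, x⟫ + b i ≤ 0)
    (htight : ∀ i, ⟪w i, v⟫ + b i = 0 → ⟪w i, x⟫ + b i = 0) : x = v := by
  obtain ⟨ε, hε, hz⟩ := exists_pos_add_smul_sub_mem hv.1 htight
  -- `v` lies strictly between `x` and `z = v + ε • (v - x)`, with weights `ε : 1`.
  refine hv.2 hx hz ⟨ε / (1 + ε), 1 / (1 + ε), by positivity, by positivity,
    by field_simp; ring, ?_⟩
  match_scalars
  · field_simp
    ring
  · field_simp

/-- The active constraints of `v` add up to a supporting hyperplane that touches the
polyhedron only at `v`. -/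
theorem isVertex_of_mem_extremePoints
    (hv : v ∈ {y : E n | ∀ i, ⟪w i, y⟫ + b i ≤ 0}.extremePoints ℝ) :
    IsVertex {y : E n | ∀ i, ⟪w i, y⟫ + b i ≤ 0} v := by
  classical
  set I := Finset.univ.filter fun i => ⟪w i, v⟫ + b i = 0
  have hsum (y : E n) : ⟪∑ i ∈ I, w i, y⟫ + ∑ i ∈ I, b i = ∑ i ∈ I, (⟪w i, y⟫ + b i) := by
    rw [sum_inner, Finset.sum_add_distrib]
  refine isFace_iff_exists_sep.2 ⟨∑ i ∈ I, w i, ∑ i ∈ I, b i, fun y hy => ?_, ?_⟩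
  · rw [hsum]
    exact Finset.sum_nonpos fun i _ => hy i
  ext y
  simp only [mem_singleton_iff, mem_sep_iff, hsum]
  constructor
  · rintro rfl
    exact ⟨hv.1, Finset.sum_eq_zero fun i hi => (Finset.mem_filter.1 hi).2⟩
  · rintro ⟨hy, hy0⟩
    refine eq_of_mem_extremePoints_of_tight hv hy fun i hi => ?_
    exact (Finset.sum_eq_zero_iff_of_nonpos fun j _ => hy j).1 hy0 i (by simp [I, hi])

end Vertices

theorem IsPolyhedral.isVertex_iff (hP : IsPolyhedral P) :
    IsVertex P v ↔ v ∈ P.extremePoints ℝ := by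
  obtain ⟨m, w, b, rfl⟩ := hP
  exact ⟨IsVertex.mem_extremePoints, isVertex_of_mem_extremePoints⟩

theorem IsFace.isVertex_iff (hPF : IsFace P F) (hP : IsPolyhedral P) (hF : IsPolyhedral F) :
    IsVertex F v ↔ IsVertex P v ∧ v ∈ F := by
  rw [hF.isVertex_iff, hP.isVertex_iff, hPF.isExtreme.extremePoints_eq, mem_inter_iff, and_comm]

theorem kpart_subset (hP : Convex ℝ P) : Kpart P ⊆ P :=
  convexHull_min (fun _ hv => hv.mem_extremePoints.1) hP

theorem IsFace.kpart_eq (hPF : IsFace P F) (hP : IsPolyhedral P) (hF : IsPolyhedral F) :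
    Kpart F = Kpart P ∩ F := by
  have hKF : Kpart F = convexHull ℝ ({v | IsVertex P v} ∩ F) := by
    rw [Kpart]
    congr 1
    ext v
    exact hPF.isVertex_iff hP hF
  have hextreme : IsExtreme ℝ (Kpart P) (Kpart P ∩ F) :=
    hPF.isExtreme.inter_of_subset (kpart_subset hP.convex)
  apply Subset.antisymm
  · rw [hKF]
    exact subset_inter (convexHull_mono inter_subset_left)
      (convexHull_min inter_subset_right hF.convex)
  · calc Kpart P ∩ F ⊆ convexHull ℝ ({v | IsVertex P v} ∩ (Kpart P ∩ F)) :=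
          hextreme.subset_convexHull_inter
      _ ⊆ Kpart F := by
          rw [hKF]
          exact convexHull_mono (inter_subset_inter_right _ inter_subset_right)

theorem IsFace.isFace_kpart (hPF : IsFace P F) (hP : IsPolyhedral P) (hF : IsPolyhedral F) :
    IsFace (Kpart P) (Kpart F) := by
  have hK := kpart_subset hP.convex
  rw [hPF.kpart_eq hP hF]
  obtain ⟨w, b, hle, rfl⟩ := isFace_iff_exists_sep.1 hPF
  refine isFace_iff_exists_sep.2 ⟨w, b, fun x hx => hle x (hK hx), ?_⟩
  ext x
  exact ⟨fun ⟨hxK, _, hx0⟩ => ⟨hxK, hx0⟩, fun ⟨hxK, hx0⟩ => ⟨hxK, hK hxK, hx0⟩⟩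

end Polyhedral

theorem Kpart_inter_general {n : ℕ} (cells : Set (Set (E n)))
    (hcx : IsPolyComplex cells)
    (C₁ C₂ : Set (E n)) (h₁ : C₁ ∈ cells) (h₂ : C₂ ∈ cells) :
    Kpart (C₁ ∩ C₂) = Kpart C₁ ∩ Kpart C₂ ∧
    IsFace (Kpart C₁) (Kpart (C₁ ∩ C₂)) ∧
    IsFace (Kpart C₂) (Kpart (C₁ ∩ C₂)) := by
  obtain ⟨-, hpoly, -, hpair⟩ := hcx
  have hP₁ := (hpoly C₁ h₁).1
  have hP₂ := (hpoly C₂ h₂).1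
  have hP₁₂ := hP₁.inter hP₂
  obtain ⟨hF₁, hF₂⟩ := hpair C₁ h₁ C₂ h₂
  refine ⟨?_, hF₁.isFace_kpart hP₁ hP₁₂, hF₂.isFace_kpart hP₂ hP₁₂⟩
  have hK₁ := hF₁.kpart_eq hP₁ hP₁₂
  have hK₂ := hF₂.kpart_eq hP₂ hP₁₂
  refine Subset.antisymm (subset_inter ?_ ?_) ?_
  · exact hK₁ ▸ inter_subset_left
  · exact hK₂ ▸ inter_subset_left
  · rintro x ⟨hx₁, hx₂⟩
    rw [hK₁]
    exact ⟨hx₁, kpart_subset hP₁.convex hx₁, kpart_subset hP₂.convex hx₂⟩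

/-- In a pointed polyhedral complex, the compact part of an intersection of two
cells is the intersection of their compact parts, and is a face of each. -/
theorem Kpart_inter {n : ℕ} (cells : Set (Set (E n)))
    (hcx : IsPolyComplex cells) (hptd : ∀ C ∈ cells, IsPointed C)
    (C₁ C₂ : Set (E n)) (h₁ : C₁ ∈ cells) (h₂ : C₂ ∈ cells)
    (hne : (C₁ ∩ C₂).Nonempty) :
    Kpart (C₁ ∩ C₂) = Kpart C₁ ∩ Kpart C₂ ∧
    IsFace (Kpart C₁) (Kpart (C₁ ∩ C₂)) ∧
    IsFace (Kpart C₂) (Kpart (C₁ ∩ C₂)) :=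
  Kpart_inter_general cells hcx C₁ C₂ h₁ h₂
end
end
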